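/- Let s ≥ 1, 0 ≤ α ≤ s, and β > 3/2. There exists a constant C = C(s,α,β) > 0 such that for every smooth divergence-free vector field b on 𝕋³ and every smooth function V on 𝕋³ one has ‖Λ^{−α} [Λ^s, b·∇] V‖_{L²(𝕋³)} ≤ C ‖b‖_{H^{s+α+β}} ‖V‖_{H^{s−α}}. -/

import Mathlib

/-!
We model functions on the torus `𝕋³ = ℝ³/ℤ³` by their Fourier coefficients,
indexed by `n ∈ ℤ³` (the actual frequency being `k = 2πn ∈ 2πℤ³`).
Smoothness corresponds to rapid decay of the Fourier coefficients, real-valuedness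
to the usual conjugation symmetry, products to convolution of coefficients, and
the `L²` norm/inner product are given by Plancherel.
-/

noncomputable section

open scoped BigOperators
open Complex

/-- Fourier frequencies of functions on `𝕋³`, indexed by `n ∈ ℤ³`; the actual
frequency is `k = 2πn ∈ 2πℤ³`. -/
abbrev Z3 : Type := Fin 3 → ℤ

/-- The Euclidean length `|k|` of the frequency `k = 2πn`. -/
def knorm (n : Z3) : ℝ := 2 * Real.pi * Real.sqrt (∑ i, ((n i : ℝ)) ^ 2)

/-- `Λ^s = (−Δ)^{s/2}` as a Fourier multiplier: `(Λ^s f)^_k = |k|^s f^_k`. -/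
def lam (s : ℝ) (c : Z3 → ℂ) : Z3 → ℂ :=
  fun n => Complex.ofReal (knorm n ^ s) * c n

/-- Squared `L²(𝕋³)` norm (Plancherel). -/
def l2sq (c : Z3 → ℂ) : ℝ := ∑' n : Z3, ‖c n‖ ^ 2

/-- `L²(𝕋³)` norm. -/
def l2norm (c : Z3 → ℂ) : ℝ := Real.sqrt (l2sq c)

/-- `L²(𝕋³)` inner product of two real-valued functions (Plancherel). -/
def inner2 (c d : Z3 → ℂ) : ℝ := (∑' n : Z3, c n * (starRingEnd ℂ) (d n)).re

/-- Sobolev `H^σ` norm: `(∑_k (1+|k|^{2σ})|f^_k|²)^{1/2}`. -/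
def hnorm (σ : ℝ) (c : Z3 → ℂ) : ℝ :=
  Real.sqrt (∑' n : Z3, (1 + knorm n ^ (2 * σ)) * ‖c n‖ ^ 2)

/-- The partial derivative `∂_j` as a Fourier multiplier. -/
def pd (j : Fin 3) (c : Z3 → ℂ) : Z3 → ℂ :=
  fun n => Complex.I * Complex.ofReal (2 * Real.pi * (n j : ℝ)) * c n

/-- Pointwise product of two functions = convolution of Fourier coefficients. -/
def conv (c d : Z3 → ℂ) : Z3 → ℂ := fun n => ∑' m : Z3, c m * d (n - m)

/-- The coefficients of a real-valued function. -/
def IsRealFn (c : Z3 → ℂ) : Prop := ∀ n : Z3, c (-n) = (starRingEnd ℂ) (c n)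

/-- Rapid decay of the Fourier coefficients, i.e. smoothness of the function. -/
def RapidDecay (c : Z3 → ℂ) : Prop :=
  ∀ N : ℕ, ∃ C : ℝ, ∀ n : Z3, ‖c n‖ * (1 + knorm n) ^ N ≤ C

/-- A smooth real-valued function on `𝕋³`, described by its Fourier coefficients. -/
def SmoothFun (c : Z3 → ℂ) : Prop := IsRealFn c ∧ RapidDecay c

/-- Zero mean. -/
def ZeroMean (c : Z3 → ℂ) : Prop := c 0 = 0

/-- A divergence-free vector field `b = (b¹,b²,b³)`: `∀ k, ∑_j k_j b^j_k = 0`. -/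
def DivFree (b : Fin 3 → Z3 → ℂ) : Prop :=
  ∀ n : Z3, ∑ j : Fin 3, (n j : ℂ) * b j n = 0

/-- The transport operator `b·∇ = b¹∂_{x₁} + b²∂_{x₂} + b³∂_z`. -/
def transport (b : Fin 3 → Z3 → ℂ) (c : Z3 → ℂ) : Z3 → ℂ :=
  fun n => ∑ j : Fin 3, conv (b j) (pd j c) n

/-- The commutator `[Λ^s, b·∇]`. -/
def commLam (s : ℝ) (b : Fin 3 → Z3 → ℂ) (c : Z3 → ℂ) : Z3 → ℂ :=
  lam s (transport b c) - transport b (lam s c)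

/-- `H^σ` norm of a 3-component vector field. -/
def hnormV3 (σ : ℝ) (b : Fin 3 → Z3 → ℂ) : ℝ :=
  Real.sqrt (∑ j : Fin 3, (hnorm σ (b j)) ^ 2)

/-- `Λ^s` acting componentwise on ℝ²-valued functions. -/
def lamV (s : ℝ) (V : Fin 2 → Z3 → ℂ) : Fin 2 → Z3 → ℂ := fun i => lam s (V i)

/-- `b·∇` acting componentwise on ℝ²-valued functions. -/
def transportV (b : Fin 3 → Z3 → ℂ) (V : Fin 2 → Z3 → ℂ) : Fin 2 → Z3 → ℂ :=
  fun i => transport b (V i)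

/-- `[Λ^s, b·∇]` acting componentwise on ℝ²-valued functions. -/
def commLamV (s : ℝ) (b : Fin 3 → Z3 → ℂ) (V : Fin 2 → Z3 → ℂ) : Fin 2 → Z3 → ℂ :=
  fun i => commLam s b (V i)

/-- `L²` norm of an ℝ²-valued function. -/
def l2normV (V : Fin 2 → Z3 → ℂ) : ℝ := Real.sqrt (∑ i : Fin 2, l2sq (V i))

/-- `L²` inner product of ℝ²-valued functions. -/
def inner2V (V W : Fin 2 → Z3 → ℂ) : ℝ := ∑ i : Fin 2, inner2 (V i) (W i)

/-- `H^σ` norm of an ℝ²-valued function. -/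
def hnormV2 (σ : ℝ) (V : Fin 2 → Z3 → ℂ) : ℝ :=
  Real.sqrt (∑ i : Fin 2, (hnorm σ (V i)) ^ 2)

/-- The hydrostatic Leray projection `𝒫φ = φ − ∇_h Δ_h^{-1} ∇_h · φ̄` as a Fourier
multiplier: the barotropic part `φ̄` consists of the modes with `n₃ = 0`, on which
`∇_h Δ_h^{-1} ∇_h ·` acts as `φ̂ ↦ n_h (n_h · φ̂)/|n_h|²` (for `n_h ≠ 0`). -/
def hproj (V : Fin 2 → Z3 → ℂ) : Fin 2 → Z3 → ℂ := fun i n =>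
  if n 2 = 0 ∧ ¬(n 0 = 0 ∧ n 1 = 0) then
    V i n - (n i.castSucc : ℂ) * ((n 0 : ℂ) * V 0 n + (n 1 : ℂ) * V 1 n) /
      (((n 0 : ℂ)) ^ 2 + ((n 1 : ℂ)) ^ 2)
  else V i n

/-- `ℚ = I − 𝒫`. -/
def qproj (V : Fin 2 → Z3 → ℂ) : Fin 2 → Z3 → ℂ := fun i => V i - hproj V i

/-- The commutator `[𝒫, b·∇]` on ℝ²-valued functions. -/
def commProj (b : Fin 3 → Z3 → ℂ) (V : Fin 2 → Z3 → ℂ) : Fin 2 → Z3 → ℂ :=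
  fun i => hproj (transportV b V) i - transportV b (hproj V) i

/-- A smooth ℝ²-valued function on `𝕋³`. -/
def SmoothV2 (V : Fin 2 → Z3 → ℂ) : Prop := ∀ i, SmoothFun (V i)

/-- A smooth vector field on `𝕋³`. -/
def SmoothV3 (b : Fin 3 → Z3 → ℂ) : Prop := ∀ j, SmoothFun (b j)

/-- `∂_z b^h = ∂_z (b¹, b²)`. -/
def dzbh (b : Fin 3 → Z3 → ℂ) : Fin 2 → Z3 → ℂ := fun i => pd 2 (b i.castSucc)

/-- `𝒫B V = 𝒫(b·∇V)`. -/
def PB (b : Fin 3 → Z3 → ℂ) (V : Fin 2 → Z3 → ℂ) : Fin 2 → Z3 → ℂ :=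
  hproj (transportV b V)

/-!
On the Fourier side `([Λ^s, b·∇]V)^_n = ∑_m (|n|^s - |n-m|^s) (b̂_m · i(n-m)) V̂_{n-m}`.
For `n ≠ 0` the mean value theorem and a Peetre-type inequality bound the symbol:
`|n|^{-α} ||n|^s - |n-m|^s| |n-m| ≤ s 2^α ⟨m⟩^{s+α} ⟨n-m⟩^{s-α}` with `⟨k⟩ = 1 + |k|`,
while the mode `n = 0` vanishes because `b` is divergence free. So the coefficients of
`Λ^{-α}[Λ^s, b·∇]V` are dominated by the convolution of `u = s 2^α ⟨·⟩^{s+α} |b̂|` with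
`v = ⟨·⟩^{s-α} |V̂|`. Young's inequality `‖u * v‖_{ℓ²} ≤ ‖u‖_{ℓ¹} ‖v‖_{ℓ²}` concludes, since
`‖v‖_{ℓ²} ≲ ‖V‖_{H^{s-α}}` and, by Cauchy–Schwarz against the weight `⟨·⟩^{-2β}` (summable on
`ℤ³` as `2β > 3`), `‖u‖_{ℓ¹} ≲ ‖b‖_{H^{s+α+β}}`.
-/

open Real

theorem rpow_sub_rpow_le_mul_rpow {x y s : ℝ} (hy : 0 ≤ y) (hxy : y ≤ x) (hs : 1 ≤ s) :
    x ^ s - y ^ s ≤ s * (x - y) * x ^ (s - 1) := by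
  rcases hxy.eq_or_lt with rfl | hlt
  · simp
  have hx : 0 < x := hy.trans_lt hlt
  have hbern : 1 + s * (y / x - 1) ≤ (y / x) ^ s := by
    simpa using one_add_mul_self_le_rpow_one_add (s := y / x - 1)
      (by linarith [div_nonneg hy hx.le]) hs
  have hratio : (y / x) ^ s * x ^ s = y ^ s := by
    rw [← mul_rpow (div_nonneg hy hx.le) hx.le, div_mul_cancel₀ _ hx.ne']
  have hxs : x ^ (s - 1) * x = x ^ s := by
    rw [rpow_sub_one hx.ne', div_mul_cancel₀ _ hx.ne']
  have hscaled := mul_le_mul_of_nonneg_right hbern (rpow_nonneg hx.le s)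
  rw [hratio, ← hxs] at hscaled
  field_simp at hscaled ⊢
  nlinarith [rpow_nonneg hx.le (s - 1)]

theorem abs_rpow_sub_rpow_le {x y s : ℝ} (hx : 0 ≤ x) (hy : 0 ≤ y) (hs : 1 ≤ s) :
    |x ^ s - y ^ s| ≤ s * |x - y| * max x y ^ (s - 1) := by
  rcases le_total y x with h | h
  · rw [abs_of_nonneg (by linarith [rpow_le_rpow hy h (by linarith : 0 ≤ s)]),
      abs_of_nonneg (by linarith), max_eq_left h]
    exact rpow_sub_rpow_le_mul_rpow hy h hs
  · rw [abs_sub_comm, abs_of_nonneg (by linarith [rpow_le_rpow hx h (by linarith : 0 ≤ s)]),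
      abs_sub_comm, abs_of_nonneg (by linarith), max_eq_right h]
    exact rpow_sub_rpow_le_mul_rpow hx h hs

theorem one_add_rpow_le_two_rpow_mul {t r : ℝ} (ht : 0 ≤ t) (hr : 0 ≤ r) :
    (1 + t) ^ r ≤ 2 ^ r * (1 + t ^ r) := by
  have hmax : 1 + t ≤ 2 * max 1 t := by linarith [le_max_left 1 t, le_max_right 1 t]
  calc (1 + t) ^ r ≤ (2 * max 1 t) ^ r := rpow_le_rpow (by linarith) hmax hr
    _ = 2 ^ r * max 1 t ^ r := mul_rpow zero_le_two (by positivity)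
    _ ≤ 2 ^ r * (1 + t ^ r) := by
        gcongr
        rcases le_total 1 t with h | h
        · rw [max_eq_right h]; linarith
        · rw [max_eq_left h, one_rpow]; linarith [rpow_nonneg ht r]

theorem tsum_sq_le_tsum_mul_tsum_of_sq_le_mul {ι : Type*} {r f g : ι → ℝ}
    (hf : ∀ i, 0 ≤ f i) (hg : ∀ i, 0 ≤ g i) (hrfg : ∀ i, r i ^ 2 ≤ f i * g i)
    (hf_sum : Summable f) (hg_sum : Summable g) :
    (∑' i, r i) ^ 2 ≤ (∑' i, f i) * ∑' i, g i := by
  have hr_sum : Summable r := by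
    refine (hf_sum.add hg_sum).of_norm_bounded fun i => ?_
    rw [norm_eq_abs]
    exact abs_le_of_sq_le_sq (by nlinarith [hrfg i, hf i, hg i]) (by linarith [hf i, hg i])
  exact le_of_tendsto_of_tendsto' (hr_sum.hasSum.pow 2)
    (Filter.Tendsto.mul hf_sum.hasSum hg_sum.hasSum)
    fun s => Finset.sum_sq_le_sum_mul_sum_of_sq_le_mul s (fun i _ => hf i) (fun i _ => hg i)
      fun i _ => hrfg i

theorem abs_rpow_sub_rpow_mul_le {a c μ s : ℝ} (ha : 0 ≤ a) (hc : 0 ≤ c) (hμ : |a - c| ≤ μ)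
    (hs : 1 ≤ s) : |a ^ s - c ^ s| * c ≤ s * (1 + μ) ^ s * (1 + c) ^ s := by
  have hμ0 : 0 ≤ μ := (abs_nonneg _).trans hμ
  have hmax : max a c ≤ (1 + c) * (1 + μ) :=
    max_le (by nlinarith [(abs_le.1 hμ).2]) (by nlinarith)
  have hpow : max a c ^ (s - 1) ≤ (1 + c) ^ (s - 1) * (1 + μ) ^ (s - 1) :=
    (rpow_le_rpow (le_max_of_le_left ha) hmax (by linarith)).trans_eq
      (mul_rpow (by linarith) (by linarith))
  have hsucc : ∀ x : ℝ, 0 ≤ x → (1 + x) ^ (s - 1) * (1 + x) = (1 + x) ^ s := fun x hx => by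
    rw [rpow_sub_one (by linarith), div_mul_cancel₀ _ (by linarith)]
  calc |a ^ s - c ^ s| * c ≤ (s * μ * ((1 + c) ^ (s - 1) * (1 + μ) ^ (s - 1))) * (1 + c) := by
        have hdiff : |a ^ s - c ^ s| ≤ s * μ * ((1 + c) ^ (s - 1) * (1 + μ) ^ (s - 1)) :=
          (abs_rpow_sub_rpow_le ha hc hs).trans (by gcongr)
        exact mul_le_mul hdiff (by linarith) hc (by positivity)
    _ ≤ s * ((1 + μ) ^ (s - 1) * (1 + μ)) * ((1 + c) ^ (s - 1) * (1 + c)) := by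
        have : 0 ≤ s * ((1 + c) ^ (s - 1) * (1 + μ) ^ (s - 1)) * (1 + c) := by positivity
        nlinarith
    _ = s * (1 + μ) ^ s * (1 + c) ^ s := by rw [hsucc μ hμ0, hsucc c hc]

theorem rpow_neg_mul_one_add_rpow_le {a c μ α : ℝ} (ha : 1 ≤ a) (hc : 0 ≤ c) (hμ : |a - c| ≤ μ)
    (hα : 0 ≤ α) : a ^ (-α) * (1 + c) ^ α ≤ 2 ^ α * (1 + μ) ^ α := by
  have hμ0 : 0 ≤ μ := (abs_nonneg _).trans hμ
  have hratio : (1 + c) / a ≤ 2 * (1 + μ) := by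
    rw [div_le_iff₀ (by linarith)]
    nlinarith [(abs_le.1 hμ).1]
  calc a ^ (-α) * (1 + c) ^ α = ((1 + c) / a) ^ α := by
        rw [rpow_neg (by linarith), div_rpow (by linarith) (by linarith), inv_mul_eq_div]
    _ ≤ (2 * (1 + μ)) ^ α := rpow_le_rpow (by positivity) hratio hα
    _ = 2 ^ α * (1 + μ) ^ α := mul_rpow zero_le_two (by linarith)

theorem commutator_symbol_le {a c μ s α : ℝ} (ha : 1 ≤ a) (hc : 0 ≤ c) (hμ : |a - c| ≤ μ)
    (hs : 1 ≤ s) (hα : 0 ≤ α) :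
    a ^ (-α) * (|a ^ s - c ^ s| * c) ≤ s * 2 ^ α * (1 + μ) ^ (s + α) * (1 + c) ^ (s - α) := by
  have hμ0 : 0 ≤ μ := (abs_nonneg _).trans hμ
  have hsplit : (1 + c) ^ s = (1 + c) ^ α * (1 + c) ^ (s - α) := by
    rw [← rpow_add (by linarith), add_sub_cancel]
  calc a ^ (-α) * (|a ^ s - c ^ s| * c)
      ≤ a ^ (-α) * (s * (1 + μ) ^ s * (1 + c) ^ s) := by
        exact mul_le_mul_of_nonneg_left (abs_rpow_sub_rpow_mul_le (by linarith) hc hμ hs)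
          (by positivity)
    _ = s * (1 + μ) ^ s * (1 + c) ^ (s - α) * (a ^ (-α) * (1 + c) ^ α) := by rw [hsplit]; ring
    _ ≤ s * (1 + μ) ^ s * (1 + c) ^ (s - α) * (2 ^ α * (1 + μ) ^ α) := by
        exact mul_le_mul_of_nonneg_left (rpow_neg_mul_one_add_rpow_le ha hc hμ hα)
          (by positivity)
    _ = s * 2 ^ α * (1 + μ) ^ (s + α) * (1 + c) ^ (s - α) := by
        rw [rpow_add (by linarith)]; ring

theorem summable_fin_pi_prod {α : Type*} {f : α → ℝ} (hf : ∀ a, 0 ≤ f a) (hf_sum : Summable f)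
    (d : ℕ) : Summable (fun x : Fin d → α => ∏ i, f (x i)) := by
  induction d with
  | zero => exact (hasSum_fintype _).summable
  | succ d ih =>
    have hprod : Summable (fun p : α × (Fin d → α) => f p.1 * ∏ i, f (p.2 i)) :=
      Summable.mul_of_nonneg (g := fun x : Fin d → α => ∏ i, f (x i)) hf_sum ih hf
        fun x => Finset.prod_nonneg fun i _ => hf (x i)
    rw [← (Fin.consEquiv fun _ => α).summable_iff]
    convert hprod using 2 with p
    simp only [Function.comp_apply, Fin.consEquiv_apply, Fin.prod_univ_succ, Fin.cons_zero,
      Fin.cons_succ]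

theorem tsum_norm_sq_le_of_le_convolution {G E : Type*} [AddCommGroup G]
    [SeminormedAddCommGroup E] {u v : G → ℝ} {w : G → E}
    (hu : ∀ m, 0 ≤ u m) (hu_sum : Summable u)
    (hv_sum : Summable (fun q => v q ^ 2)) (hw : ∀ n, ‖w n‖ ≤ ∑' m, u m * v (n - m)) :
    ∑' n, ‖w n‖ ^ 2 ≤ (∑' m, u m) ^ 2 * ∑' q, v q ^ 2 := by
  set Q := ∑' q, v q ^ 2
  have hvQ : ∀ q, v q ^ 2 ≤ Q := fun q => hv_sum.le_tsum q fun _ _ => sq_nonneg _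
  have hsum_sq : ∀ n, Summable (fun m => u m * v (n - m) ^ 2) := fun n =>
    (hu_sum.mul_right Q).of_nonneg_of_le (fun m => mul_nonneg (hu m) (sq_nonneg _))
      fun m => mul_le_mul_of_nonneg_left (hvQ _) (hu m)
  have hpt : ∀ n, ‖w n‖ ^ 2 ≤ (∑' m, u m) * ∑' m, u m * v (n - m) ^ 2 := fun n =>
    (pow_le_pow_left₀ (norm_nonneg _) (hw n) 2).trans <|
      tsum_sq_le_tsum_mul_tsum_of_sq_le_mul hu (fun m => mul_nonneg (hu m) (sq_nonneg _))
        (fun m => by nlinarith [hu m]) hu_sum (hsum_sq n)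
  refine tsum_le_of_sum_le' (by positivity) fun S => ?_
  calc ∑ n ∈ S, ‖w n‖ ^ 2 ≤ ∑ n ∈ S, (∑' m, u m) * ∑' m, u m * v (n - m) ^ 2 :=
        Finset.sum_le_sum fun n _ => hpt n
    _ = (∑' m, u m) * ∑' m, u m * ∑ n ∈ S, v (n - m) ^ 2 := by
        rw [← Finset.mul_sum, ← Summable.tsum_finsetSum fun n _ => hsum_sq n]
        simp only [Finset.mul_sum]
    _ ≤ (∑' m, u m) * ∑' m, u m * Q := by
        have hshift : ∀ m, ∑ n ∈ S, v (n - m) ^ 2 ≤ Q := fun m => by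
          have hmap : ∑ n ∈ S, v (n - m) ^ 2 =
              ∑ q ∈ S.map (Equiv.subRight m).toEmbedding, v q ^ 2 := by
            simp [Finset.sum_map]
          rw [hmap]
          exact hv_sum.sum_le_tsum _ fun _ _ => sq_nonneg _
        have hbound m := mul_le_mul_of_nonneg_left (hshift m) (hu m)
        refine mul_le_mul_of_nonneg_left (Summable.tsum_le_tsum hbound ?_ (hu_sum.mul_right Q))
          (tsum_nonneg hu)
        exact (hu_sum.mul_right Q).of_nonneg_of_le
          (fun m => mul_nonneg (hu m) (Finset.sum_nonneg fun _ _ => sq_nonneg _)) hbound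
    _ = (∑' m, u m) ^ 2 * Q := by rw [tsum_mul_right]; ring

def toEuclideanFreq (n : Z3) : EuclideanSpace ℝ (Fin 3) := WithLp.toLp 2 fun i => (n i : ℝ)

theorem knorm_eq_norm (n : Z3) : knorm n = 2 * π * ‖toEuclideanFreq n‖ := by
  simp [knorm, toEuclideanFreq, EuclideanSpace.norm_eq]

theorem knorm_nonneg (n : Z3) : 0 ≤ knorm n := by
  rw [knorm_eq_norm]; positivity

theorem one_le_one_add_knorm (n : Z3) : 1 ≤ 1 + knorm n := by
  linarith [knorm_nonneg n]

theorem knorm_zero : knorm 0 = 0 := by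
  simp [knorm]

theorem knorm_neg (n : Z3) : knorm (-n) = knorm n := by
  simp [knorm]

theorem knorm_add_le (n m : Z3) : knorm (n + m) ≤ knorm n + knorm m := by
  have h : toEuclideanFreq (n + m) = toEuclideanFreq n + toEuclideanFreq m := by
    ext i; simp [toEuclideanFreq]
  rw [knorm_eq_norm, knorm_eq_norm, knorm_eq_norm, h, ← mul_add]
  gcongr
  exact norm_add_le _ _

theorem abs_knorm_sub_knorm_sub_le (n m : Z3) : |knorm n - knorm (n - m)| ≤ knorm m := by
  have h₁ := knorm_add_le m (n - m)
  have h₂ := knorm_add_le n (-m)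
  rw [add_sub_cancel] at h₁
  rw [knorm_neg, ← sub_eq_add_neg] at h₂
  exact abs_sub_le_iff.2 ⟨by linarith, by linarith⟩

theorem two_pi_mul_abs_le_knorm (n : Z3) (j : Fin 3) : 2 * π * |(n j : ℝ)| ≤ knorm n := by
  rw [knorm_eq_norm]
  gcongr
  simpa [toEuclideanFreq] using PiLp.norm_apply_le (toEuclideanFreq n) j

theorem one_le_knorm {n : Z3} (hn : n ≠ 0) : 1 ≤ knorm n := by
  obtain ⟨j, hj⟩ := Function.ne_iff.1 hn
  have h1 : (1 : ℝ) ≤ |(n j : ℝ)| := by exact_mod_cast Int.one_le_abs hj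
  nlinarith [two_pi_mul_abs_le_knorm n j, pi_gt_three]

theorem summable_one_add_knorm_rpow {r : ℝ} (hr : 3 < r) :
    Summable fun n : Z3 => (1 + knorm n) ^ (-r) := by
  have hline : Summable fun k : ℤ => (1 + |(k : ℝ)|) ^ (-(r / 3)) := by
    refine (summable_abs_int_rpow (b := r / 3) (by linarith)).of_norm_bounded_eventually ?_
    filter_upwards [(Set.finite_singleton (0 : ℤ)).compl_mem_cofinite] with k hk
    have hk : (0 : ℝ) < |(k : ℝ)| := by simpa using hk
    rw [norm_of_nonneg (by positivity)]
    exact rpow_le_rpow_of_nonpos hk (by linarith) (by linarith)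
  refine (summable_fin_pi_prod (fun k => by positivity) hline 3).of_nonneg_of_le
    (fun n => by have := knorm_nonneg n; positivity) fun n => ?_
  have hprod : ∏ i, (1 + |(n i : ℝ)|) ≤ (1 + knorm n) ^ 3 := by
    rw [← Fin.prod_const]
    gcongr with i
    nlinarith [two_pi_mul_abs_le_knorm n i, pi_gt_three, abs_nonneg (n i : ℝ)]
  have hpow : (1 + knorm n) ^ (-r) = ((1 + knorm n) ^ 3) ^ (-(r / 3)) := by
    rw [← rpow_natCast, ← rpow_mul (by linarith [knorm_nonneg n])]
    congr 1
    push_cast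
    ring
  rw [hpow, finsetProd_rpow _ _ fun i _ => by positivity]
  exact rpow_le_rpow_of_nonpos (by positivity) hprod (by linarith)

theorem norm_pd_le (j : Fin 3) (c : Z3 → ℂ) (n : Z3) : ‖pd j c n‖ ≤ knorm n * ‖c n‖ := by
  rw [pd, norm_mul, norm_mul, Complex.norm_I, one_mul, Complex.norm_real, norm_eq_abs, abs_mul,
    abs_of_pos two_pi_pos]
  gcongr
  exact two_pi_mul_abs_le_knorm n j

theorem norm_lam (s : ℝ) (c : Z3 → ℂ) (n : Z3) : ‖lam s c n‖ = knorm n ^ s * ‖c n‖ := by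
  rw [lam, norm_mul, Complex.norm_real, norm_of_nonneg (rpow_nonneg (knorm_nonneg n) s)]

def weightedCoeff (σ : ℝ) (c : Z3 → ℂ) (n : Z3) : ℝ := ‖c n‖ * (1 + knorm n) ^ σ

theorem weightedCoeff_nonneg (σ : ℝ) (c : Z3 → ℂ) (n : Z3) : 0 ≤ weightedCoeff σ c n :=
  mul_nonneg (norm_nonneg _) (rpow_nonneg (by linarith [knorm_nonneg n]) _)

theorem weightedCoeff_add (σ τ : ℝ) (c : Z3 → ℂ) (n : Z3) :
    weightedCoeff (σ + τ) c n = weightedCoeff σ c n * (1 + knorm n) ^ τ := by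
  rw [weightedCoeff, weightedCoeff, rpow_add (by linarith [knorm_nonneg n]), mul_assoc]

theorem weightedCoeff_sq (σ : ℝ) (c : Z3 → ℂ) (n : Z3) :
    weightedCoeff σ c n ^ 2 = ‖c n‖ ^ 2 * (1 + knorm n) ^ (2 * σ) := by
  rw [weightedCoeff, mul_pow, ← rpow_mul_natCast (by linarith [knorm_nonneg n]), mul_comm σ]
  norm_num

theorem weightedCoeff_sq_le {σ : ℝ} (hσ : 0 ≤ σ) (c : Z3 → ℂ) (n : Z3) :
    weightedCoeff σ c n ^ 2 ≤ 2 ^ (2 * σ) * ((1 + knorm n ^ (2 * σ)) * ‖c n‖ ^ 2) := by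
  rw [weightedCoeff_sq, mul_comm (‖c n‖ ^ 2), ← mul_assoc]
  gcongr
  exact one_add_rpow_le_two_rpow_mul (knorm_nonneg n) (by linarith)

theorem hnorm_sq (σ : ℝ) (c : Z3 → ℂ) :
    hnorm σ c ^ 2 = ∑' n, (1 + knorm n ^ (2 * σ)) * ‖c n‖ ^ 2 :=
  sq_sqrt <| tsum_nonneg fun n => by have := rpow_nonneg (knorm_nonneg n) (2 * σ); positivity

section RapidDecay

variable {c : Z3 → ℂ}

namespace RapidDecay

theorem exists_weightedCoeff_le (hc : RapidDecay c) (t : ℝ) :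
    ∃ C, ∀ n, weightedCoeff t c n ≤ C := by
  obtain ⟨N, hN⟩ := exists_nat_ge t
  obtain ⟨C, hC⟩ := hc N
  refine ⟨C, fun n => (hC n).trans' ?_⟩
  rw [weightedCoeff, ← rpow_natCast]
  gcongr
  exact one_le_one_add_knorm n

theorem exists_norm_le (hc : RapidDecay c) : ∃ C, ∀ n, ‖c n‖ ≤ C := by
  simpa [weightedCoeff] using hc.exists_weightedCoeff_le 0

theorem summable_weightedCoeff (hc : RapidDecay c) (t : ℝ) : Summable (weightedCoeff t c) := by
  obtain ⟨C, hC⟩ := hc.exists_weightedCoeff_le (t + 4)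
  refine ((summable_one_add_knorm_rpow (by norm_num : (3 : ℝ) < 4)).mul_left C).of_nonneg_of_le
    (weightedCoeff_nonneg t c) fun n => ?_
  have h := weightedCoeff_add (t + 4) (-4) c n
  rw [add_neg_cancel_right] at h
  rw [h]
  exact mul_le_mul_of_nonneg_right (hC n) (rpow_nonneg (by linarith [knorm_nonneg n]) _)

theorem summable_norm (hc : RapidDecay c) : Summable fun n => ‖c n‖ :=
  (hc.summable_weightedCoeff 0).congr fun n => by simp [weightedCoeff]

theorem summable_weightedCoeff_sq (hc : RapidDecay c) (t : ℝ) :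
    Summable fun n => weightedCoeff t c n ^ 2 := by
  obtain ⟨C, hC⟩ := hc.exists_weightedCoeff_le t
  refine ((hc.summable_weightedCoeff t).mul_left C).of_nonneg_of_le (fun n => sq_nonneg _)
    fun n => ?_
  rw [sq]
  exact mul_le_mul_of_nonneg_right (hC n) (weightedCoeff_nonneg t c n)

theorem summable_hnorm_series (hc : RapidDecay c) {σ : ℝ} (hσ : 0 ≤ σ) :
    Summable fun n => (1 + knorm n ^ (2 * σ)) * ‖c n‖ ^ 2 := by
  refine ((hc.summable_weightedCoeff_sq σ).mul_left 2).of_nonneg_of_le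
    (fun n => by have := rpow_nonneg (knorm_nonneg n) (2 * σ); positivity) fun n => ?_
  have h1 : knorm n ^ (2 * σ) ≤ (1 + knorm n) ^ (2 * σ) :=
    rpow_le_rpow (knorm_nonneg n) (by linarith) (by linarith)
  have h2 : 1 ≤ (1 + knorm n) ^ (2 * σ) := one_le_rpow (one_le_one_add_knorm n) (by linarith)
  rw [weightedCoeff_sq]
  nlinarith [sq_nonneg ‖c n‖]

theorem pd (hc : RapidDecay c) (j : Fin 3) : RapidDecay (pd j c) := by
  intro N
  obtain ⟨C, hC⟩ := hc (N + 1)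
  refine ⟨C, fun n => (hC n).trans' ?_⟩
  have hk := one_le_one_add_knorm n
  calc ‖_root_.pd j c n‖ * (1 + knorm n) ^ N ≤ ((1 + knorm n) * ‖c n‖) * (1 + knorm n) ^ N :=
        mul_le_mul_of_nonneg_right ((norm_pd_le j c n).trans (by gcongr; linarith))
          (by positivity)
    _ = ‖c n‖ * (1 + knorm n) ^ (N + 1) := by ring

theorem lam (hc : RapidDecay c) {s : ℝ} (hs : 0 ≤ s) : RapidDecay (lam s c) := by
  intro N
  obtain ⟨M, hM⟩ := exists_nat_ge s
  obtain ⟨C, hC⟩ := hc (N + M)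
  refine ⟨C, fun n => (hC n).trans' ?_⟩
  have hpow : knorm n ^ s ≤ (1 + knorm n) ^ M := by
    rw [← rpow_natCast]
    exact (rpow_le_rpow (knorm_nonneg n) (by linarith) hs).trans
      (rpow_le_rpow_of_exponent_le (one_le_one_add_knorm n) hM)
  rw [norm_lam, pow_add]
  have hk := one_le_one_add_knorm n
  calc knorm n ^ s * ‖c n‖ * (1 + knorm n) ^ N
        ≤ (1 + knorm n) ^ M * ‖c n‖ * (1 + knorm n) ^ N := by
        gcongr
    _ = ‖c n‖ * ((1 + knorm n) ^ N * (1 + knorm n) ^ M) := by ring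

end RapidDecay

theorem sqrt_tsum_weightedCoeff_sq_le (hc : RapidDecay c) {σ : ℝ} (hσ : 0 ≤ σ) :
    √(∑' n, weightedCoeff σ c n ^ 2) ≤ 2 ^ σ * hnorm σ c := by
  rw [sqrt_le_left (by unfold hnorm; positivity), mul_pow, hnorm_sq,
    ← rpow_mul_natCast zero_le_two, ← tsum_mul_left]
  refine (hc.summable_weightedCoeff_sq σ).tsum_le_tsum (fun n => ?_)
    ((hc.summable_hnorm_series hσ).mul_left _)
  simpa [mul_comm σ] using weightedCoeff_sq_le hσ c n


theorem tsum_weightedCoeff_le {c : Z3 → ℂ} (hc : RapidDecay c) {σ β : ℝ} (hσβ : 0 ≤ σ + β)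
    (hβ : 3 / 2 < β) :
    ∑' n, weightedCoeff σ c n ≤
      √(∑' n, (1 + knorm n) ^ (-(2 * β))) * (2 ^ (σ + β) * hnorm (σ + β) c) := by
  have hweight n : 0 ≤ (1 + knorm n) ^ (-(2 * β)) := rpow_nonneg (by linarith [knorm_nonneg n]) _
  have hsq n : weightedCoeff σ c n ^ 2 =
      (1 + knorm n) ^ (-(2 * β)) * weightedCoeff (σ + β) c n ^ 2 := by
    rw [weightedCoeff_sq, weightedCoeff_sq, mul_left_comm,
      ← rpow_add (by linarith [knorm_nonneg n])]
    congr 2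
    ring
  have hcs := tsum_sq_le_tsum_mul_tsum_of_sq_le_mul hweight (fun n => sq_nonneg _)
    (fun n => (hsq n).le) (summable_one_add_knorm_rpow (by linarith))
    (hc.summable_weightedCoeff_sq (σ + β))
  calc ∑' n, weightedCoeff σ c n
      ≤ √(∑' n, (1 + knorm n) ^ (-(2 * β))) * √(∑' n, weightedCoeff (σ + β) c n ^ 2) := by
        rw [← sqrt_mul (tsum_nonneg hweight)]
        exact le_sqrt_of_sq_le hcs
    _ ≤ _ := by gcongr; exact sqrt_tsum_weightedCoeff_sq_le hc hσβ

end RapidDecay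

theorem sum_hnorm_le_sqrt_three_mul_hnormV3 (σ : ℝ) (b : Fin 3 → Z3 → ℂ) :
    ∑ j, hnorm σ (b j) ≤ √3 * hnormV3 σ b := by
  simpa [hnormV3, mul_comm] using
    Real.sum_mul_le_sqrt_mul_sqrt Finset.univ (fun j => hnorm σ (b j)) 1

theorem tsum_sum_weightedCoeff_le {b : Fin 3 → Z3 → ℂ} (hb : ∀ j, RapidDecay (b j)) {σ β : ℝ}
    (hσβ : 0 ≤ σ + β) (hβ : 3 / 2 < β) :
    ∑' n, ∑ j, weightedCoeff σ (b j) n ≤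
      √(∑' n, (1 + knorm n) ^ (-(2 * β))) * 2 ^ (σ + β) * (√3 * hnormV3 (σ + β) b) := by
  rw [Summable.tsum_finsetSum fun j _ => (hb j).summable_weightedCoeff σ]
  calc ∑ j, ∑' n, weightedCoeff σ (b j) n
      ≤ ∑ j, √(∑' n, (1 + knorm n) ^ (-(2 * β))) * (2 ^ (σ + β) * hnorm (σ + β) (b j)) :=
        Finset.sum_le_sum fun j _ => tsum_weightedCoeff_le (hb j) hσβ hβ
    _ = √(∑' n, (1 + knorm n) ^ (-(2 * β))) * 2 ^ (σ + β) * ∑ j, hnorm (σ + β) (b j) := by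
        rw [Finset.mul_sum]; simp only [mul_assoc]
    _ ≤ _ := by gcongr; exact sum_hnorm_le_sqrt_three_mul_hnormV3 _ b

theorem RapidDecay.summable_mul_shift {f g : Z3 → ℂ} (hf : RapidDecay f) (hg : RapidDecay g)
    (n : Z3) : Summable fun m => f m * g (n - m) := by
  obtain ⟨C, hC⟩ := hg.exists_norm_le
  exact (hf.summable_norm.mul_right C).of_norm_bounded fun m => by
    rw [norm_mul]; exact mul_le_mul_of_nonneg_left (hC _) (norm_nonneg _)

def commKernel (s : ℝ) (b : Fin 3 → Z3 → ℂ) (V : Z3 → ℂ) (n m : Z3) : ℂ :=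
  ((knorm n ^ s - knorm (n - m) ^ s : ℝ) : ℂ) * ∑ j, b j m * pd j V (n - m)

theorem commLam_eq_tsum_commKernel {s : ℝ} (hs : 0 ≤ s) {b : Fin 3 → Z3 → ℂ} {V : Z3 → ℂ}
    (hb : ∀ j, RapidDecay (b j)) (hV : RapidDecay V) (n : Z3) :
    commLam s b V n = ∑' m, commKernel s b V n m := by
  have h₁ j := ((hb j).summable_mul_shift (hV.pd j) n).mul_left ((knorm n ^ s : ℝ) : ℂ)
  have h₂ j := (hb j).summable_mul_shift ((hV.lam hs).pd j) n
  have hpd_lam : ∀ j q, pd j (lam s V) q = (knorm q ^ s : ℝ) * pd j V q := by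
    intro j q; simp only [pd, lam]; ring
  have hterm : ∀ m, commKernel s b V n m =
      ∑ j, (((knorm n ^ s : ℝ) : ℂ) * (b j m * pd j V (n - m)) - b j m * pd j (lam s V) (n - m)) := by
    intro m
    simp only [commKernel, hpd_lam, Finset.mul_sum, Complex.ofReal_sub]
    refine Finset.sum_congr rfl fun j _ => ?_
    ring
  rw [tsum_congr hterm, Summable.tsum_finsetSum fun j _ => (h₁ j).sub (h₂ j)]
  simp only [commLam, transport, lam, conv, Pi.sub_apply, Finset.mul_sum, ← Finset.sum_sub_distrib]
  refine Finset.sum_congr rfl fun j _ => ?_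
  rw [(h₁ j).tsum_sub (h₂ j), tsum_mul_left]

theorem commKernel_zero_left {b : Fin 3 → Z3 → ℂ} (hdiv : DivFree b) (s : ℝ) (V : Z3 → ℂ)
    (m : Z3) : commKernel s b V 0 m = 0 := by
  have h : ∑ j, b j m * pd j V (0 - m) =
      -(Complex.I * (2 * π : ℝ) * V (-m)) * ∑ j, (m j : ℂ) * b j m := by
    rw [Finset.mul_sum]
    refine Finset.sum_congr rfl fun j _ => ?_
    simp only [pd, zero_sub, Pi.neg_apply, Int.cast_neg, Complex.ofReal_mul, Complex.ofReal_neg,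
      Complex.ofReal_intCast]
    ring
  rw [commKernel, h, hdiv m, mul_zero, mul_zero]

theorem norm_commKernel_le (s : ℝ) (b : Fin 3 → Z3 → ℂ) (V : Z3 → ℂ) (n m : Z3) :
    ‖commKernel s b V n m‖ ≤
      |knorm n ^ s - knorm (n - m) ^ s| * knorm (n - m) * (∑ j, ‖b j m‖) * ‖V (n - m)‖ := by
  rw [commKernel, norm_mul, Complex.norm_real, norm_eq_abs]
  calc |knorm n ^ s - knorm (n - m) ^ s| * ‖∑ j, b j m * pd j V (n - m)‖
      ≤ |knorm n ^ s - knorm (n - m) ^ s| * ∑ j, ‖b j m‖ * (knorm (n - m) * ‖V (n - m)‖) := by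
        gcongr
        refine (norm_sum_le _ _).trans (Finset.sum_le_sum fun j _ => ?_)
        rw [norm_mul]
        gcongr
        exact norm_pd_le j V (n - m)
    _ = _ := by rw [← Finset.sum_mul]; ring

theorem knorm_rpow_neg_mul_norm_commKernel_le {s α : ℝ} (hs : 1 ≤ s) (hα : 0 ≤ α)
    (b : Fin 3 → Z3 → ℂ) (V : Z3 → ℂ) {n : Z3} (hn : n ≠ 0) (m : Z3) :
    knorm n ^ (-α) * ‖commKernel s b V n m‖ ≤
      (s * 2 ^ α * ∑ j, weightedCoeff (s + α) (b j) m) * weightedCoeff (s - α) V (n - m) := by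
  have hsymb := commutator_symbol_le (s := s) (one_le_knorm hn) (knorm_nonneg (n - m))
    (abs_knorm_sub_knorm_sub_le n m) hs hα
  calc knorm n ^ (-α) * ‖commKernel s b V n m‖
      ≤ knorm n ^ (-α) * (|knorm n ^ s - knorm (n - m) ^ s| * knorm (n - m)) *
          ((∑ j, ‖b j m‖) * ‖V (n - m)‖) := by
        rw [mul_assoc]
        gcongr
        · exact rpow_nonneg (knorm_nonneg n) _
        · exact (norm_commKernel_le s b V n m).trans_eq (by ring)
    _ ≤ (s * 2 ^ α * (1 + knorm m) ^ (s + α) * (1 + knorm (n - m)) ^ (s - α)) *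
          ((∑ j, ‖b j m‖) * ‖V (n - m)‖) := by gcongr
    _ = _ := by simp only [weightedCoeff, ← Finset.sum_mul]; ring

theorem norm_lam_neg_commLam_le {s α : ℝ} (hs : 1 ≤ s) (hα : 0 ≤ α) {b : Fin 3 → Z3 → ℂ}
    (hb : ∀ j, RapidDecay (b j)) (hdiv : DivFree b) {V : Z3 → ℂ} (hV : RapidDecay V) (n : Z3) :
    ‖lam (-α) (commLam s b V) n‖ ≤
      ∑' m, (s * 2 ^ α * ∑ j, weightedCoeff (s + α) (b j) m) * weightedCoeff (s - α) V (n - m) := by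
  set u := fun m => s * 2 ^ α * ∑ j, weightedCoeff (s + α) (b j) m
  have hu : ∀ m, 0 ≤ u m := fun m =>
    mul_nonneg (by positivity) (Finset.sum_nonneg fun j _ => weightedCoeff_nonneg _ _ _)
  have hu_sum : Summable u :=
    (summable_sum fun j _ => (hb j).summable_weightedCoeff (s + α)).mul_left _
  obtain ⟨C, hC⟩ := hV.exists_weightedCoeff_le (s - α)
  have hbound : HasSum (fun m => u m * weightedCoeff (s - α) V (n - m)) _ :=
    ((hu_sum.mul_right C).of_nonneg_of_le (fun m => mul_nonneg (hu m) (weightedCoeff_nonneg _ _ _))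
      fun m => mul_le_mul_of_nonneg_left (hC _) (hu m)).hasSum
  have hweight : knorm n ^ (-α) * ‖∑' m, commKernel s b V n m‖ =
      ‖∑' m, ((knorm n ^ (-α) : ℝ) : ℂ) * commKernel s b V n m‖ := by
    rw [tsum_mul_left, norm_mul, Complex.norm_real, norm_of_nonneg (rpow_nonneg (knorm_nonneg n) _)]
  rw [norm_lam, commLam_eq_tsum_commKernel (by linarith) hb hV, hweight]
  by_cases hn : n = 0
  · subst hn
    simp only [commKernel_zero_left hdiv, mul_zero, tsum_zero, norm_zero]
    exact hbound.nonneg fun m => mul_nonneg (hu m) (weightedCoeff_nonneg _ _ _)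
  · refine tsum_of_norm_bounded hbound fun m => ?_
    rw [norm_mul, Complex.norm_real, norm_of_nonneg (rpow_nonneg (knorm_nonneg n) _)]
    exact knorm_rpow_neg_mul_norm_commKernel_le hs hα b V hn m

/-- Let `s ≥ 1`, `0 ≤ α ≤ s` and `β > 3/2`. There is `C = C(s,α,β) > 0`
such that for every smooth divergence-free vector field `b` on `𝕋³` and every smooth
function `V` on `𝕋³`, `‖Λ^{−α} [Λ^s, b·∇] V‖_{L²} ≤ C ‖b‖_{H^{s+α+β}} ‖V‖_{H^{s−α}}`. -/
theorem stmt2 (s α β : ℝ) (hs : 1 ≤ s) (hα0 : 0 ≤ α) (hαs : α ≤ s) (hβ : 3 / 2 < β) :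
    ∃ C : ℝ, 0 < C ∧
      ∀ b : Fin 3 → Z3 → ℂ, SmoothV3 b → DivFree b →
        ∀ V : Z3 → ℂ, SmoothFun V →
          l2norm (lam (-α) (commLam s b V)) ≤ C * hnormV3 (s + α + β) b * hnorm (s - α) V := by
  set K := ∑' n : Z3, (1 + knorm n) ^ (-(2 * β))
  have hK : 0 < K := (summable_one_add_knorm_rpow (by linarith)).tsum_pos
    (fun n => rpow_nonneg (by linarith [knorm_nonneg n]) _) 0 (by simp [knorm_zero])
  refine ⟨s * 2 ^ α * (√K * 2 ^ (s + α + β) * √3) * 2 ^ (s - α), by positivity,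
    fun b hb hdiv V hV => ?_⟩
  have hb' j := (hb j).2
  set u := fun m => s * 2 ^ α * ∑ j, weightedCoeff (s + α) (b j) m
  have hu m : 0 ≤ u m :=
    mul_nonneg (by positivity) (Finset.sum_nonneg fun j _ => weightedCoeff_nonneg _ _ _)
  have hu_le : ∑' m, u m ≤ s * 2 ^ α * (√K * 2 ^ (s + α + β) * (√3 * hnormV3 (s + α + β) b)) := by
    rw [tsum_mul_left]
    gcongr
    exact tsum_sum_weightedCoeff_le hb' (by linarith) hβ
  have hv_le := sqrt_tsum_weightedCoeff_sq_le hV.2 (by linarith : 0 ≤ s - α)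
  have hyoung := tsum_norm_sq_le_of_le_convolution hu
    ((summable_sum fun j _ => (hb' j).summable_weightedCoeff (s + α)).mul_left _)
    (hV.2.summable_weightedCoeff_sq (s - α)) (norm_lam_neg_commLam_le hs hα0 hb' hdiv hV.2)
  calc l2norm (lam (-α) (commLam s b V))
      ≤ √((∑' m, u m) ^ 2 * ∑' q, weightedCoeff (s - α) V q ^ 2) := sqrt_le_sqrt hyoung
    _ = (∑' m, u m) * √(∑' q, weightedCoeff (s - α) V q ^ 2) := by
        rw [sqrt_mul (sq_nonneg _), sqrt_sq (tsum_nonneg hu)]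
    _ ≤ _ := (mul_le_mul hu_le hv_le (sqrt_nonneg _) ((tsum_nonneg hu).trans hu_le)).trans_eq
        (by ring)
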